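/- arXiv:2010.06606 — 2 statements merged into one kernel-verified Lean document; each statement's English description precedes it below -/
import Mathlib

section
/- Define $I(s,\theta)=\frac{1}{2}\log\big(\frac{1-2\theta s+\theta^2}{1-s^2}\big)$ for $s\in[a(\theta),b(\theta)]$ and $I(s,\theta)=\log|\theta-2s|$ otherwise, where $a(\theta)=\frac{1}{4}(\theta-\sqrt{\theta^2+8})$ and $b(\theta)=\frac{1}{4}(\theta+\sqrt{\theta^2+8})$ and $\theta\in(-1,1)$. Then $I(s,\theta)\geq 0$ for all $s\in\mathbb{R}$, and $I$ is continuous in $s$ on $\mathbb{R}$ (the two branches agree at $s=a(\theta)$ and $s=b(\theta)$). -/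
open Set Real

/-- The rate function of the least squares estimator of the coefficient of a stationary
scalar AR(1) process is nonnegative and continuous in `s`. -/
theorem stmt_12 (θ : ℝ) (hθ : θ ∈ Set.Ioo (-1 : ℝ) 1) :
    (∀ s : ℝ, 0 ≤ (if s ∈ Set.Icc ((θ - Real.sqrt (θ ^ 2 + 8)) / 4)
          ((θ + Real.sqrt (θ ^ 2 + 8)) / 4) then
        (1 / 2) * Real.log ((1 - 2 * θ * s + θ ^ 2) / (1 - s ^ 2))
      else Real.log |θ - 2 * s|)) ∧
    Continuous (fun s : ℝ =>
      if s ∈ Set.Icc ((θ - Real.sqrt (θ ^ 2 + 8)) / 4) ((θ + Real.sqrt (θ ^ 2 + 8)) / 4) then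
        (1 / 2) * Real.log ((1 - 2 * θ * s + θ ^ 2) / (1 - s ^ 2))
      else Real.log |θ - 2 * s|) := by
  obtain ⟨hθ1, hθ2⟩ := hθ
  set r := Real.sqrt (θ ^ 2 + 8) with hr_def
  have hr2 : r ^ 2 = θ ^ 2 + 8 := Real.sq_sqrt (by positivity)
  have hr0 : 0 ≤ r := Real.sqrt_nonneg _
  have hr_lt1 : r < 4 - θ := by nlinarith [sq_nonneg (r - (4 - θ))]
  have hr_lt2 : r < 4 + θ := by nlinarith [sq_nonneg (r - (4 + θ))]
  have hr_gt1 : 2 - θ < r := by nlinarith [sq_nonneg (r - (2 - θ))]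
  have hr_gt2 : 2 + θ < r := by nlinarith [sq_nonneg (r - (2 + θ))]
  set a := (θ - r) / 4 with ha_def
  set b := (θ + r) / 4 with hb_def
  have ha1 : (-1 : ℝ) < a := by rw [ha_def]; linarith
  have hb1 : b < 1 := by rw [hb_def]; linarith
  have hab : a < b := by rw [ha_def, hb_def]; nlinarith
  -- branch functions
  set g : ℝ → ℝ := fun s => (1 / 2) * Real.log ((1 - 2 * θ * s + θ ^ 2) / (1 - s ^ 2)) with hg_def
  set h : ℝ → ℝ := fun s => Real.log |θ - 2 * s| with hh_def
  set f : ℝ → ℝ := fun s => if s ∈ Set.Icc a b then g s else h s with hf_def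
  -- basic facts on [a,b]
  have hden : ∀ s, s ∈ Set.Icc a b → 0 < 1 - s ^ 2 := by
    intro s hs
    have h1 : -1 < s := lt_of_lt_of_le ha1 hs.1
    have h2 : s < 1 := lt_of_le_of_lt hs.2 hb1
    nlinarith
  have hratio : ∀ s, s ∈ Set.Icc a b → 1 ≤ (1 - 2 * θ * s + θ ^ 2) / (1 - s ^ 2) := by
    intro s hs
    rw [le_div_iff₀ (hden s hs)]
    nlinarith [sq_nonneg (s - θ)]
  -- outside the interval
  have habs : ∀ s, s ∉ Set.Icc a b → 1 < |θ - 2 * s| := by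
    intro s hs
    rw [Set.mem_Icc, not_and_or, not_le, not_le] at hs
    rcases hs with hs | hs
    · have : 1 < θ - 2 * s := by rw [ha_def] at hs; linarith
      calc (1 : ℝ) < θ - 2 * s := this
        _ ≤ |θ - 2 * s| := le_abs_self _
    · have : 1 < -(θ - 2 * s) := by rw [hb_def] at hs; linarith
      calc (1 : ℝ) < -(θ - 2 * s) := this
        _ ≤ |θ - 2 * s| := neg_le_abs _
  -- endpoint equalities
  have hep : ∀ s, 2 * s ^ 2 = θ * s + 1 → 0 < 1 - s ^ 2 → g s = h s := by
    intro s hq hd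
    have hnum : 1 - 2 * θ * s + θ ^ 2 = (θ - 2 * s) ^ 2 * (1 - s ^ 2) := by nlinarith [hq]
    have hne : (1 : ℝ) - s ^ 2 ≠ 0 := ne_of_gt hd
    have : (1 - 2 * θ * s + θ ^ 2) / (1 - s ^ 2) = (θ - 2 * s) ^ 2 := by
      rw [hnum]; field_simp
    rw [hg_def, hh_def]
    simp only [this]
    rw [Real.log_pow, ← Real.log_abs (θ - 2 * s)]
    push_cast
    ring
  have hqa : 2 * a ^ 2 = θ * a + 1 := by rw [ha_def]; nlinarith
  have hqb : 2 * b ^ 2 = θ * b + 1 := by rw [hb_def]; nlinarith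
  have hga : g a = h a := hep a hqa (hden a ⟨le_refl _, le_of_lt hab⟩)
  have hgb : g b = h b := hep b hqb (hden b ⟨le_of_lt hab, le_refl _⟩)
  constructor
  · intro s
    by_cases hs : s ∈ Set.Icc a b
    · rw [if_pos hs]
      have := Real.log_nonneg (hratio s hs)
      linarith
    · rw [if_neg hs]
      exact Real.log_nonneg (le_of_lt (habs s hs))
  · -- continuity: glue on Iic a, Icc a b, Ici b
    have hfg : Set.EqOn f g (Set.Icc a b) := fun s hs => if_pos hs
    have hcg : ContinuousOn f (Set.Icc a b) := by
      refine ContinuousOn.congr ?_ hfg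
      apply ContinuousOn.mul continuousOn_const
      apply ContinuousOn.log
      · apply ContinuousOn.div
        · exact ((continuous_const.sub (continuous_const.mul continuous_id)).add
            continuous_const).continuousOn
        · exact (continuous_const.sub (continuous_pow 2)).continuousOn
        · intro s hs; exact ne_of_gt (hden s hs)
      · intro s hs
        exact ne_of_gt (lt_of_lt_of_le one_pos (hratio s hs))
    have hh_cont : ∀ s : ℝ, θ - 2 * s ≠ 0 → ContinuousAt h s := by
      intro s hs
      apply ContinuousAt.log
      · exact (continuous_abs.comp
          (continuous_const.sub (continuous_const.mul continuous_id))).continuousAt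
      · simpa [abs_eq_zero] using hs
    have hfh_left : Set.EqOn f h (Set.Iic a) := by
      intro s hs
      rcases eq_or_lt_of_le (Set.mem_Iic.1 hs) with heq | hlt
      · rw [heq, hf_def]
        simp only [if_pos (Set.mem_Icc.2 ⟨le_refl a, le_of_lt hab⟩)]
        exact hga
      · exact if_neg (by rw [Set.mem_Icc, not_and_or]; left; exact not_le.2 hlt)
    have hfh_right : Set.EqOn f h (Set.Ici b) := by
      intro s hs
      rcases eq_or_lt_of_le (Set.mem_Ici.1 hs) with heq | hlt
      · rw [← heq, hf_def]
        simp only [if_pos (Set.mem_Icc.2 ⟨le_of_lt hab, le_refl b⟩)]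
        exact hgb
      · exact if_neg (by rw [Set.mem_Icc, not_and_or]; right; exact not_le.2 hlt)
    have hcl : ContinuousOn f (Set.Iic a) := by
      refine ContinuousOn.congr ?_ hfh_left
      intro s hs
      refine (hh_cont s ?_).continuousWithinAt
      have : s ≤ a := Set.mem_Iic.1 hs
      rw [ha_def] at this
      intro hcontra; linarith [hr_gt1]
    have hcr : ContinuousOn f (Set.Ici b) := by
      refine ContinuousOn.congr ?_ hfh_right
      intro s hs
      refine (hh_cont s ?_).continuousWithinAt
      have : b ≤ s := Set.mem_Ici.1 hs
      rw [hb_def] at this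
      intro hcontra; linarith [hr_gt2]
    have key : Continuous f := by
      have hlf : LocallyFinite ![Set.Iic a, Set.Icc a b, Set.Ici b] :=
        locallyFinite_of_finite _
      refine hlf.continuous ?_ ?_ ?_
      · apply Set.eq_univ_of_forall
        intro s
        simp only [Set.mem_iUnion]
        by_cases h1 : s ≤ a
        · exact ⟨0, h1⟩
        · by_cases h2 : s ≤ b
          · exact ⟨1, ⟨le_of_not_ge h1, h2⟩⟩
          · exact ⟨2, le_of_not_ge h2⟩
      · intro i
        fin_cases i
        · exact isClosed_Iic
        · exact isClosed_Icc
        · exact isClosed_Ici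
      · intro i
        fin_cases i
        · exact hcl
        · exact hcg
        · exact hcr
    exact key
end

section
/- Let $I:\mathbb{S}\times\mathrm{cl}\,\Theta\to[0,\infty]$ be a rate function with compact sublevel sets $\{(s,\theta): I(s,\theta)\leq r\}$ for all $r\geq 0$, where $\Theta\subseteq\mathbb{R}^d$ is relatively open and convex. Suppose that for every $s$ in a subset $\mathbb{S}_\infty\subseteq\mathbb{S}$, every $\theta\in\mathrm{cl}\,\Theta$ and every $\theta_s\in\Theta$ with $I(s,\theta_s)=0$, one has $I(s,(1-\lambda)\theta_s+\lambda\theta)\leq I(s,\theta)$ for all $\lambda\in[0,1)$, with strict inequality whenever $I(s,\theta)>0$; assume such a $\theta_s$ exists for each $s\in\mathbb{S}_\infty$. Then for every $s\in\mathbb{S}_\infty$ and $r>0$, $\mathrm{cl}\{\theta\in\Theta: I(s,\theta)<r\} = \{\theta\in\mathrm{cl}\,\Theta: I(s,\theta)\leq r\}$ (radial monotonicity). -/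
open Set Filter Topology
open scoped ENNReal

/-- Line segment principle: in a finite-dimensional real normed space, the open segment
(including the interior endpoint) between a point of the intrinsic interior of a convex set
and a point of its closure lies in the intrinsic interior. -/
lemma seg_principle {E : Type*} [NormedAddCommGroup E] [NormedSpace ℝ E]
    [FiniteDimensional ℝ E] {Θ : Set E} (hconv : Convex ℝ Θ)
    {x y : E} (hx : x ∈ intrinsicInterior ℝ Θ) (hy : y ∈ closure Θ)
    {lam : ℝ} (h0 : 0 ≤ lam) (h1 : lam < 1) :
    (1 - lam) • x + lam • y ∈ intrinsicInterior ℝ Θ := by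
  rcases eq_or_lt_of_le h0 with rfl | hpos
  · simpa using hx
  set μ : ℝ := 1 - lam with hμdef
  have hμ : 0 < μ := by simp [hμdef]; linarith
  have hμ0 : μ ≠ 0 := ne_of_gt hμ
  set A := affineSpan ℝ Θ with hA
  have hAclosed : IsClosed (A : Set E) := A.closed_of_finiteDimensional
  have hΘA : Θ ⊆ (A : Set E) := subset_affineSpan ℝ Θ
  have hyA : y ∈ (A : Set E) := closure_minimal hΘA hAclosed hy
  obtain ⟨x', hx', rfl⟩ := hx
  have hxA : (x' : E) ∈ (A : Set E) := x'.2
  set z : E := (1 - lam) • (x' : E) + lam • y with hz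
  have hzA : z ∈ (A : Set E) := by
    have h := A.smul_vsub_vadd_mem lam hyA hxA hxA
    have : lam • (y -ᵥ (x' : E)) +ᵥ (x' : E) = z := by
      rw [vsub_eq_sub, vadd_eq_add, hz]; module
    rwa [this] at h
  rw [mem_interior_iff_mem_nhds, Metric.mem_nhds_iff] at hx'
  obtain ⟨ε, hε, hball⟩ := hx'
  refine ⟨⟨z, hzA⟩, ?_, rfl⟩
  rw [mem_interior_iff_mem_nhds, Metric.mem_nhds_iff]
  refine ⟨μ * ε / 2, by positivity, ?_⟩
  rintro w hw
  rw [Metric.mem_ball, Subtype.dist_eq] at hw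
  obtain ⟨y', hy'Θ, hyy'⟩ := Metric.mem_closure_iff.mp hy (μ * ε / (2 * lam))
    (by positivity)
  set u : E := μ⁻¹ • ((w : E) - lam • y') with hu
  have huA : u ∈ (A : Set E) := by
    have h := A.smul_vsub_vadd_mem μ⁻¹ w.2 (hΘA hy'Θ) (hΘA hy'Θ)
    have heq : μ⁻¹ • ((w : E) -ᵥ y') +ᵥ y' = u := by
      rw [vsub_eq_sub, vadd_eq_add, hu, smul_sub, smul_sub]
      rw [show (lam : ℝ) = 1 - μ by simp [hμdef]]
      rw [sub_smul, one_smul, smul_sub, inv_smul_smul₀ hμ0]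
      abel
    rwa [heq] at h
  have hμu : μ • u = (w : E) - lam • y' := by rw [hu, smul_inv_smul₀ hμ0]
  have hμx : μ • (x' : E) = z - lam • y := by rw [hz, hμdef]; module
  have key : μ • (u - (x' : E)) = ((w : E) - z) + lam • (y - y') := by
    rw [smul_sub, hμu, hμx, smul_sub]; abel
  have hnorm : ‖u - (x' : E)‖ < ε := by
    have h1 : μ * ‖u - (x' : E)‖ = ‖μ • (u - (x' : E))‖ := by
      rw [norm_smul, Real.norm_of_nonneg hμ.le]
    have h2 : ‖((w : E) - z) + lam • (y - y')‖ ≤ ‖(w : E) - z‖ + lam * ‖y - y'‖ := by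
      calc ‖((w : E) - z) + lam • (y - y')‖ ≤ ‖(w : E) - z‖ + ‖lam • (y - y')‖ :=
            norm_add_le _ _
        _ = ‖(w : E) - z‖ + lam * ‖y - y'‖ := by
            rw [norm_smul, Real.norm_of_nonneg h0]
    have h3 : ‖(w : E) - z‖ < μ * ε / 2 := by rwa [← dist_eq_norm]
    have h4 : lam * ‖y - y'‖ < μ * ε / 2 := by
      have : ‖y - y'‖ < μ * ε / (2 * lam) := by rwa [← dist_eq_norm]
      calc lam * ‖y - y'‖ < lam * (μ * ε / (2 * lam)) := by
            exact (mul_lt_mul_iff_right₀ hpos).mpr this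
        _ = μ * ε / 2 := by field_simp
    have : μ * ‖u - (x' : E)‖ < μ * ε := by
      rw [h1, key]
      calc ‖((w : E) - z) + lam • (y - y')‖ ≤ ‖(w : E) - z‖ + lam * ‖y - y'‖ := h2
        _ < μ * ε / 2 + μ * ε / 2 := by linarith
        _ = μ * ε := by ring
    exact (mul_lt_mul_iff_right₀ hμ).mp this
  have huΘ : u ∈ Θ := by
    have : (⟨u, huA⟩ : A) ∈ Metric.ball x' ε := by
      rw [Metric.mem_ball, Subtype.dist_eq, dist_eq_norm]
      exact hnorm
    exact hball this
  have : μ • u + lam • y' ∈ Θ := hconv huΘ hy'Θ hμ.le h0 (by rw [hμdef]; ring)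
  have hweq : μ • u + lam • y' = (w : E) := by rw [hμu]; abel
  rwa [hweq] at this

/-- Radial monotonicity of a level-compact rate function: the closure of the open
`r`-sublevel set in `Θ` equals the closed `r`-sublevel set in `cl Θ`. -/
theorem stmt_18 {d : ℕ} (S Sinf Θ : Set (EuclideanSpace ℝ (Fin d)))
    (hSinf : Sinf ⊆ S)
    (hΘconv : Convex ℝ Θ)
    (hΘrelopen : intrinsicInterior ℝ Θ = Θ)
    (I : EuclideanSpace ℝ (Fin d) → EuclideanSpace ℝ (Fin d) → ℝ≥0∞)
    (hlevel : ∀ r : ℝ≥0∞, r ≠ ⊤ →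
      IsCompact {p : EuclideanSpace ℝ (Fin d) × EuclideanSpace ℝ (Fin d) |
        (p.1 ∈ S ∧ p.2 ∈ closure Θ) ∧ I p.1 p.2 ≤ r})
    (hexists : ∀ s ∈ Sinf, ∃ θs ∈ Θ, I s θs = 0)
    (hradial : ∀ s ∈ Sinf, ∀ θ ∈ closure Θ, ∀ θs ∈ Θ, I s θs = 0 →
      ∀ lam : ℝ, lam ∈ Set.Ico (0 : ℝ) 1 →
        I s ((1 - lam) • θs + lam • θ) ≤ I s θ ∧
        (0 < I s θ → I s ((1 - lam) • θs + lam • θ) < I s θ)) :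
    ∀ s ∈ Sinf, ∀ r : ℝ≥0∞, 0 < r → r ≠ ⊤ →
      closure {θ ∈ Θ | I s θ < r} = {θ ∈ closure Θ | I s θ ≤ r} := by
  intro s hs r hr0 hrtop
  have hsS : s ∈ S := hSinf hs
  apply Subset.antisymm
  · refine closure_minimal ?_ ?_
    · rintro θ ⟨hθ, hI⟩
      exact ⟨subset_closure hθ, hI.le⟩
    · have hK : IsClosed {p : EuclideanSpace ℝ (Fin d) × EuclideanSpace ℝ (Fin d) |
          (p.1 ∈ S ∧ p.2 ∈ closure Θ) ∧ I p.1 p.2 ≤ r} := (hlevel r hrtop).isClosed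
      have heq : {θ ∈ closure Θ | I s θ ≤ r} =
          (fun θ => (s, θ)) ⁻¹' {p : EuclideanSpace ℝ (Fin d) × EuclideanSpace ℝ (Fin d) |
            (p.1 ∈ S ∧ p.2 ∈ closure Θ) ∧ I p.1 p.2 ≤ r} := by
        ext θ
        simp only [mem_setOf_eq, mem_preimage]
        tauto
      rw [heq]
      exact hK.preimage (Continuous.prodMk_right s)
  · rintro θ ⟨hθcl, hIθ⟩
    obtain ⟨θs, hθs, hI0⟩ := hexists s hs
    have hθsInt : θs ∈ intrinsicInterior ℝ Θ := by rw [hΘrelopen]; exact hθs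
    set f : ℝ → EuclideanSpace ℝ (Fin d) := fun lam => (1 - lam) • θs + lam • θ with hf
    have hmem : ∀ lam ∈ Ico (0 : ℝ) 1, f lam ∈ {θ ∈ Θ | I s θ < r} := by
      intro lam hlam
      have hΘm : f lam ∈ Θ := by
        have := seg_principle hΘconv hθsInt hθcl hlam.1 hlam.2
        rwa [hΘrelopen] at this
      refine ⟨hΘm, ?_⟩
      obtain ⟨hle, hlt⟩ := hradial s hs θ hθcl θs hθs hI0 lam hlam
      rcases lt_or_eq_of_le hIθ with h | h
      · exact hle.trans_lt h
      · exact (hlt (h ▸ hr0)).trans_le hIθ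
    have hfc : Continuous f := by
      apply Continuous.add
      · exact (continuous_const.sub continuous_id).smul continuous_const
      · exact continuous_id.smul continuous_const
    have h1cl : (1 : ℝ) ∈ closure (Ico (0 : ℝ) 1) := by
      rw [closure_Ico (zero_ne_one)]
      exact ⟨zero_le_one, le_refl 1⟩
    haveI hne : (𝓝[Ico (0 : ℝ) 1] 1).NeBot := mem_closure_iff_nhdsWithin_neBot.mp h1cl
    have hf1 : f 1 = θ := by simp [hf]
    have htend : Filter.Tendsto f (𝓝[Ico (0 : ℝ) 1] 1) (𝓝 θ) := by
      have := (hfc.tendsto 1).mono_left (nhdsWithin_le_nhds : 𝓝[Ico (0:ℝ) 1] 1 ≤ 𝓝 1)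
      rwa [hf1] at this
    exact mem_closure_of_tendsto htend (Filter.eventually_of_mem self_mem_nhdsWithin hmem)
end
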